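/- Let A ∈ ℝ^{2n×2n}, let x_1, …, x_n ∈ ℝ^{2n} be linearly independent vectors spanning a Lagrangian subspace, i.e. x_iᵀ J x_j = 0 for all i, j, let Ĥ := X_R X_L⁺ + Jᵀ (X_R X_L⁺)ᵀ J, and let X_L^⊥ ∈ ℝ^{2n×(n+1)} have columns forming an orthonormal basis of span{x_1,…,x_{n-1}}^⊥. Define S := -(1/2)[ (X_L^⊥)ᵀ J (Ĥ - A) X_L^⊥ + (X_L^⊥)ᵀ (Ĥ - A)ᵀ J X_L^⊥ ] and H := Ĥ + Jᵀ X_L^⊥ S (X_L^⊥)ᵀ. Then ‖H - A‖_F ≤ ‖H' - A‖_F for every skew-Hamiltonian matrix H' ∈ ℝ^{2n×2n} satisfying H' x_k = x_{k+1} for all k = 1, …, n-1. -/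

import Mathlib

open Matrix

noncomputable section

/-- The canonical skew-symmetric matrix `J = [[0, I],[-I, 0]]`. -/
def Jmat (n : ℕ) : Matrix (Fin n ⊕ Fin n) (Fin n ⊕ Fin n) ℝ :=
  Matrix.fromBlocks 0 1 (-1) 0

/-- A matrix `H` is skew-Hamiltonian if `Jᵀ Hᵀ J = H`. -/
def IsSkewHamiltonian {n : ℕ} (H : Matrix (Fin n ⊕ Fin n) (Fin n ⊕ Fin n) ℝ) : Prop :=
  (Jmat n)ᵀ * Hᵀ * Jmat n = H

/-- `X_L = [x_1 ⋯ x_{n-1}]`. -/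
def XL {n : ℕ} (x : Fin n → (Fin n ⊕ Fin n) → ℝ) :
    Matrix (Fin n ⊕ Fin n) (Fin (n - 1)) ℝ :=
  Matrix.of fun i j => x ⟨j.1, lt_of_lt_of_le j.2 (Nat.sub_le n 1)⟩ i

/-- `X_R = [x_2 ⋯ x_n]`. -/
def XR {n : ℕ} (x : Fin n → (Fin n ⊕ Fin n) → ℝ) :
    Matrix (Fin n ⊕ Fin n) (Fin (n - 1)) ℝ :=
  Matrix.of fun i j => x ⟨j.1 + 1, by have := j.2; omega⟩ i

/-- The Moore–Penrose pseudoinverse `X_L⁺ = (X_Lᵀ X_L)⁻¹ X_Lᵀ` of `X_L`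
(for `X_L` with linearly independent columns). -/
def XLpinv {n : ℕ} (x : Fin n → (Fin n ⊕ Fin n) → ℝ) :
    Matrix (Fin (n - 1)) (Fin n ⊕ Fin n) ℝ :=
  ((XL x)ᵀ * XL x)⁻¹ * (XL x)ᵀ

/-- `Ĥ = X_R X_L⁺ + Jᵀ (X_R X_L⁺)ᵀ J`. -/
def Hhat {n : ℕ} (x : Fin n → (Fin n ⊕ Fin n) → ℝ) :
    Matrix (Fin n ⊕ Fin n) (Fin n ⊕ Fin n) ℝ :=
  XR x * XLpinv x + (Jmat n)ᵀ * (XR x * XLpinv x)ᵀ * Jmat n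

/-- `H` realizes the Krylov relations `H x_k = x_{k+1}`, `k = 1, …, n-1`. -/
def KrylovRel {n : ℕ} (H : Matrix (Fin n ⊕ Fin n) (Fin n ⊕ Fin n) ℝ)
    (x : Fin n → (Fin n ⊕ Fin n) → ℝ) : Prop :=
  ∀ k : Fin (n - 1), H *ᵥ x ⟨k.1, lt_of_lt_of_le k.2 (Nat.sub_le n 1)⟩
    = x ⟨k.1 + 1, by have := k.2; omega⟩

/-- The Frobenius norm of a real matrix. -/
def frobNorm {m m' : Type*} [Fintype m] [Fintype m'] (M : Matrix m m' ℝ) : ℝ :=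
  Real.sqrt (∑ i, ∑ j, (M i j) ^ 2)

/-!
Let `H'` be skew-Hamiltonian with `H' x_k = x_{k+1}`. The Lagrangian condition gives
`Ĥ X_L = X_R`, and `Ĥ` is skew-Hamiltonian, so `D := H' - Ĥ` is skew-Hamiltonian with
`D X_L = 0`. Then `J D` is skew-symmetric and kills `span X_L` from both sides, hence
`J D = X_L^⊥ K (X_L^⊥)ᵀ` with `K` skew, and `H' - A = (H - A) + Jᵀ X_L^⊥ (K - S) (X_L^⊥)ᵀ`.
The choice of `S` makes `(X_L^⊥)ᵀ J (H - A) X_L^⊥` symmetric, so the correction term is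
Frobenius-orthogonal to `H - A` (a symmetric and a skew matrix are trace-orthogonal), and
Pythagoras gives `‖H - A‖_F ≤ ‖H' - A‖_F`.
-/

namespace Matrix

variable {m p : Type*} [Fintype m] [Fintype p]

lemma isUnit_transpose_mul_self_of_linearIndependent_col [DecidableEq p] {A : Matrix m p ℝ}
    (hA : LinearIndependent ℝ A.col) : IsUnit (Aᵀ * A) := by
  rw [← mulVec_injective_iff_isUnit, ← coe_mulVecLin, ← LinearMap.ker_eq_bot,
    ker_mulVecLin_transpose_mul_self, LinearMap.ker_eq_bot, coe_mulVecLin]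
  exact mulVec_injective_iff.mpr hA

lemma IsSymm.trace_mul_eq_zero {M E : Matrix m m ℝ} (hM : M.IsSymm) (hE : Eᵀ = -E) :
    trace (M * E) = 0 := by
  have h : trace (M * E) = -trace (M * E) := by
    conv_lhs => rw [← trace_transpose, transpose_mul, hM.eq, hE, neg_mul, trace_neg,
      trace_mul_comm]
  linarith

lemma trace_transpose_mul_conj_eq_zero {Jm B : Matrix m m ℝ} {P : Matrix m p ℝ}
    {E : Matrix p p ℝ} (hsym : (Pᵀ * Jm * B * P).IsSymm) (hE : Eᵀ = -E) :
    trace (Bᵀ * (Jmᵀ * (P * E * Pᵀ))) = 0 := by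
  have h : Bᵀ * (Jmᵀ * (P * E * Pᵀ)) = (Bᵀ * Jmᵀ * P * E) * Pᵀ := by
    simp only [Matrix.mul_assoc]
  rw [h, trace_mul_comm, ← hsym.trace_mul_eq_zero hE, ← hsym.eq]
  simp only [transpose_mul, transpose_transpose, Matrix.mul_assoc]

section OrthogonalComplement

variable [DecidableEq p] {k : Type*} {P : Matrix m p ℝ} {X : Matrix m k ℝ}

lemma mul_transpose_mul_eq_of_transpose_mul_eq_zero {q : Type*} (hP : Pᵀ * P = 1)
    (hrange : ∀ v, (∀ j, v ⬝ᵥ X.col j = 0) → ∃ w, P *ᵥ w = v)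
    {M : Matrix m q ℝ} (hMX : Mᵀ * X = 0) : P * (Pᵀ * M) = M := by
  choose w hw using fun j => hrange (M.col j) fun l => by
    simpa [dotProduct, mul_apply, col] using congrFun (congrFun hMX j) l
  have hM : M = P * (of w)ᵀ := by
    ext i j
    simpa [mulVec, dotProduct, mul_apply, col] using (congrFun (hw j) i).symm
  rw [hM, ← Matrix.mul_assoc Pᵀ, hP, Matrix.one_mul]

lemma eq_mul_conj_mul_transpose_of_mul_eq_zero (hP : Pᵀ * P = 1)
    (hrange : ∀ v, (∀ j, v ⬝ᵥ X.col j = 0) → ∃ w, P *ᵥ w = v)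
    {M : Matrix m m ℝ} (hM : Mᵀ = -M) (hMX : M * X = 0) : M = P * (Pᵀ * M * P) * Pᵀ := by
  have hl : P * (Pᵀ * M) = M := mul_transpose_mul_eq_of_transpose_mul_eq_zero hP hrange
    (by rw [hM, Matrix.neg_mul, hMX, neg_zero])
  have hr : P * (Pᵀ * Mᵀ) = Mᵀ := mul_transpose_mul_eq_of_transpose_mul_eq_zero hP hrange
    (by rwa [transpose_transpose])
  have hr' : M * P * Pᵀ = M := by
    simpa [transpose_mul, Matrix.mul_assoc] using congrArg transpose hr
  rw [Matrix.mul_assoc P, Matrix.mul_assoc, Matrix.mul_assoc, ← Matrix.mul_assoc M, hr', hl]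

end OrthogonalComplement

end Matrix

lemma frobNorm_eq_sqrt_trace {m q : Type*} [Fintype m] [Fintype q] (M : Matrix m q ℝ) :
    frobNorm M = Real.sqrt (trace (Mᵀ * M)) := by
  rw [frobNorm, Finset.sum_comm]
  simp [trace, mul_apply, sq]

lemma frobNorm_le_frobNorm_add {m q : Type*} [Fintype m] [Fintype q] {B F : Matrix m q ℝ}
    (h : trace (Bᵀ * F) = 0) : frobNorm B ≤ frobNorm (B + F) := by
  have h' : trace (Fᵀ * B) = 0 := by
    rw [← trace_transpose, transpose_mul, transpose_transpose, h]
  have hF : 0 ≤ trace (Fᵀ * F) := by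
    simpa only [trace, diag, mul_apply, transpose_apply] using
      Finset.sum_nonneg fun j _ => Finset.sum_nonneg fun i _ => mul_self_nonneg (F i j)
  rw [frobNorm_eq_sqrt_trace, frobNorm_eq_sqrt_trace]
  gcongr
  simp only [transpose_add, Matrix.add_mul, Matrix.mul_add, trace_add, h, h']
  linarith

section Symplectic

variable {n : ℕ}

lemma Jmat_transpose : (Jmat n)ᵀ = -Jmat n := by
  rw [Jmat, fromBlocks_transpose, fromBlocks_neg]
  simp

lemma Jmat_mul_self : Jmat n * Jmat n = -1 := by
  rw [Jmat, fromBlocks_multiply, ← fromBlocks_one, fromBlocks_neg]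
  simp

lemma Jmat_mul_Jmat_mul {p : Type*} (M : Matrix (Fin n ⊕ Fin n) p ℝ) :
    Jmat n * (Jmat n * M) = -M := by
  rw [← Matrix.mul_assoc, Jmat_mul_self, Matrix.neg_mul, Matrix.one_mul]

lemma Jmat_transpose_mul : (Jmat n)ᵀ * Jmat n = 1 := by
  rw [Jmat_transpose, Matrix.neg_mul, Jmat_mul_self, neg_neg]

lemma isSkewHamiltonian_add_transpose_conj (M : Matrix (Fin n ⊕ Fin n) (Fin n ⊕ Fin n) ℝ) :
    IsSkewHamiltonian (M + (Jmat n)ᵀ * Mᵀ * Jmat n) := by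
  simp only [IsSkewHamiltonian, transpose_add, transpose_neg, transpose_mul, transpose_transpose,
    Jmat_transpose, Matrix.mul_add, Matrix.add_mul, Matrix.neg_mul, Matrix.mul_neg, neg_neg,
    Matrix.mul_assoc, Jmat_mul_Jmat_mul, Jmat_mul_self, Matrix.mul_one]
  exact add_comm _ _

lemma IsSkewHamiltonian.sub {H K : Matrix (Fin n ⊕ Fin n) (Fin n ⊕ Fin n) ℝ}
    (hH : IsSkewHamiltonian H) (hK : IsSkewHamiltonian K) : IsSkewHamiltonian (H - K) := by
  rw [IsSkewHamiltonian, transpose_sub, Matrix.mul_sub, Matrix.sub_mul, hH, hK]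

lemma IsSkewHamiltonian.transpose_Jmat_mul {H : Matrix (Fin n ⊕ Fin n) (Fin n ⊕ Fin n) ℝ}
    (hH : IsSkewHamiltonian H) : (Jmat n * H)ᵀ = -(Jmat n * H) := by
  conv_rhs => rw [← hH]
  simp only [transpose_mul, Jmat_transpose, Matrix.mul_neg, Matrix.neg_mul, Matrix.mul_assoc,
    Jmat_mul_Jmat_mul, neg_neg]

lemma IsSkewHamiltonian.exists_eq_Jmat_transpose_mul_conj {p k : Type*} [Fintype p]
    [DecidableEq p] {P : Matrix (Fin n ⊕ Fin n) p ℝ}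
    {X : Matrix (Fin n ⊕ Fin n) k ℝ} (hP : Pᵀ * P = 1)
    (hrange : ∀ v, (∀ j, v ⬝ᵥ X.col j = 0) → ∃ w, P *ᵥ w = v)
    {D : Matrix (Fin n ⊕ Fin n) (Fin n ⊕ Fin n) ℝ} (hD : IsSkewHamiltonian D)
    (hDX : D * X = 0) :
    ∃ K : Matrix p p ℝ, Kᵀ = -K ∧ D = (Jmat n)ᵀ * (P * K * Pᵀ) := by
  refine ⟨Pᵀ * (Jmat n * D) * P, ?_, ?_⟩
  · rw [transpose_mul, transpose_mul, hD.transpose_Jmat_mul, transpose_transpose,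
      Matrix.neg_mul, Matrix.mul_neg, ← Matrix.mul_assoc]
  · rw [← eq_mul_conj_mul_transpose_of_mul_eq_zero hP hrange hD.transpose_Jmat_mul
      (by rw [Matrix.mul_assoc, hDX, Matrix.mul_zero]), ← Matrix.mul_assoc, Jmat_transpose_mul,
      Matrix.one_mul]

variable {p : Type*} {P : Matrix (Fin n ⊕ Fin n) p ℝ}
  {B : Matrix (Fin n ⊕ Fin n) (Fin n ⊕ Fin n) ℝ} {S : Matrix p p ℝ}

lemma transpose_conj_Jmat_mul (P : Matrix (Fin n ⊕ Fin n) p ℝ)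
    (B : Matrix (Fin n ⊕ Fin n) (Fin n ⊕ Fin n) ℝ) :
    (Pᵀ * Jmat n * B * P)ᵀ = -(Pᵀ * Bᵀ * Jmat n * P) := by
  simp only [transpose_mul, transpose_transpose, Jmat_transpose, Matrix.mul_neg, Matrix.neg_mul,
    Matrix.mul_assoc]

lemma transpose_eq_neg_of_eq_neg_half_smul
    (hS : S = -(1 / 2 : ℝ) • (Pᵀ * Jmat n * B * P + Pᵀ * Bᵀ * Jmat n * P)) : Sᵀ = -S := by
  have h := transpose_conj_Jmat_mul P B
  rw [hS, transpose_smul, transpose_add, h, ← neg_neg (Pᵀ * Bᵀ * Jmat n * P), transpose_neg,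
    ← h, transpose_transpose]
  module

lemma isSymm_conj_Jmat_mul_add_of_eq_neg_half_smul [Fintype p] [DecidableEq p]
    (hP : Pᵀ * P = 1)
    (hS : S = -(1 / 2 : ℝ) • (Pᵀ * Jmat n * B * P + Pᵀ * Bᵀ * Jmat n * P)) :
    (Pᵀ * Jmat n * (B + (Jmat n)ᵀ * (P * S * Pᵀ)) * P).IsSymm := by
  have h : Pᵀ * Jmat n * (B + (Jmat n)ᵀ * (P * S * Pᵀ)) * P = Pᵀ * Jmat n * B * P + S := by
    simp only [Matrix.mul_add, Matrix.add_mul, Matrix.mul_assoc, Jmat_transpose, Matrix.neg_mul,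
      Matrix.mul_neg, Jmat_mul_Jmat_mul, neg_neg, hP, Matrix.mul_one]
    rw [← Matrix.mul_assoc Pᵀ P, hP, Matrix.one_mul]
  rw [IsSymm, h, transpose_add, transpose_eq_neg_of_eq_neg_half_smul hS,
    transpose_conj_Jmat_mul, hS]
  module

end Symplectic

section KrylovData

variable {n : ℕ} {x : Fin n → (Fin n ⊕ Fin n) → ℝ}

lemma XLpinv_mul_XL (hx : LinearIndependent ℝ x) : XLpinv x * XL x = 1 := by
  have hGram : IsUnit ((XL x)ᵀ * XL x) := isUnit_transpose_mul_self_of_linearIndependent_col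
    (hx.comp _ (Fin.castLE_injective (Nat.sub_le n 1)))
  rw [XLpinv, Matrix.mul_assoc, nonsing_inv_mul _ ((isUnit_iff_isUnit_det _).mp hGram)]

lemma XR_transpose_mul_Jmat_mul_XL (hLag : ∀ i j : Fin n, x i ⬝ᵥ (Jmat n *ᵥ x j) = 0) :
    (XR x)ᵀ * (Jmat n * XL x) = 0 := by
  ext j k
  simpa [mul_apply, XR, XL, mulVec, dotProduct] using hLag ⟨j + 1, by omega⟩ ⟨k, by omega⟩

lemma Hhat_mul_XL (hx : LinearIndependent ℝ x)
    (hLag : ∀ i j : Fin n, x i ⬝ᵥ (Jmat n *ᵥ x j) = 0) : Hhat x * XL x = XR x := by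
  simp only [Hhat, Matrix.add_mul, transpose_mul, Matrix.mul_assoc,
    XR_transpose_mul_Jmat_mul_XL hLag, XLpinv_mul_XL hx, Matrix.mul_zero, Matrix.mul_one,
    add_zero]

lemma isSkewHamiltonian_Hhat (x : Fin n → (Fin n ⊕ Fin n) → ℝ) :
    IsSkewHamiltonian (Hhat x) :=
  isSkewHamiltonian_add_transpose_conj _

lemma KrylovRel.mul_XL {H : Matrix (Fin n ⊕ Fin n) (Fin n ⊕ Fin n) ℝ} (hH : KrylovRel H x) :
    H * XL x = XR x := by
  ext i k
  simpa [mul_apply, XL, XR, mulVec, dotProduct] using congrFun (hH k) i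

end KrylovData

/-- The skew-Hamiltonian matrix `H = Ĥ + Jᵀ X_L^⊥ S (X_L^⊥)ᵀ` with
`S = -(1/2)[(X_L^⊥)ᵀ J (Ĥ - A) X_L^⊥ + (X_L^⊥)ᵀ (Ĥ - A)ᵀ J X_L^⊥]` is the best
Frobenius-norm approximation to `A` among all skew-Hamiltonian matrices realizing the
Krylov relations `H' x_k = x_{k+1}`. -/
theorem best_skewHamiltonian_approximation {n : ℕ}
    (A : Matrix (Fin n ⊕ Fin n) (Fin n ⊕ Fin n) ℝ)
    (x : Fin n → (Fin n ⊕ Fin n) → ℝ)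
    (hLI : LinearIndependent ℝ x)
    (hLag : ∀ i j : Fin n, x i ⬝ᵥ (Jmat n *ᵥ x j) = 0)
    (XLperp : Matrix (Fin n ⊕ Fin n) (Fin (n + 1)) ℝ)
    (hON : XLperpᵀ * XLperp = 1)
    (hperp : ∀ v : (Fin n ⊕ Fin n) → ℝ,
      (∃ w : Fin (n + 1) → ℝ, XLperp *ᵥ w = v) ↔
      ∀ k : Fin (n - 1), v ⬝ᵥ x ⟨k.1, lt_of_lt_of_le k.2 (Nat.sub_le n 1)⟩ = 0)
    (S : Matrix (Fin (n + 1)) (Fin (n + 1)) ℝ)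
    (hS : S = -(1 / 2 : ℝ) • (XLperpᵀ * Jmat n * (Hhat x - A) * XLperp
      + XLperpᵀ * (Hhat x - A)ᵀ * Jmat n * XLperp))
    (H : Matrix (Fin n ⊕ Fin n) (Fin n ⊕ Fin n) ℝ)
    (hH : H = Hhat x + (Jmat n)ᵀ * (XLperp * S * XLperpᵀ)) :
    ∀ H' : Matrix (Fin n ⊕ Fin n) (Fin n ⊕ Fin n) ℝ,
      IsSkewHamiltonian H' → KrylovRel H' x →
      frobNorm (H - A) ≤ frobNorm (H' - A) := by
  intro H' hH' hKrylov
  obtain ⟨K, hK, hD⟩ := (hH'.sub (isSkewHamiltonian_Hhat x)).exists_eq_Jmat_transpose_mul_conj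
    (X := XL x) hON (fun v hv => (hperp v).mpr hv)
    (by rw [Matrix.sub_mul, hKrylov.mul_XL, Hhat_mul_XL hLI hLag, sub_self])
  have hsym : (XLperpᵀ * Jmat n * (H - A) * XLperp).IsSymm := by
    rw [show H - A = Hhat x - A + (Jmat n)ᵀ * (XLperp * S * XLperpᵀ) by rw [hH]; abel]
    exact isSymm_conj_Jmat_mul_add_of_eq_neg_half_smul hON hS
  have hKS : (K - S)ᵀ = -(K - S) := by
    rw [transpose_sub, hK, transpose_eq_neg_of_eq_neg_half_smul hS, neg_sub, neg_sub_neg]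
  calc frobNorm (H - A)
      ≤ frobNorm (H - A + (Jmat n)ᵀ * (XLperp * (K - S) * XLperpᵀ)) :=
        frobNorm_le_frobNorm_add (trace_transpose_mul_conj_eq_zero hsym hKS)
    _ = frobNorm (H' - A) := by
        rw [← sub_add_cancel H' (Hhat x), hD, hH]
        simp only [Matrix.mul_sub, Matrix.sub_mul]
        abel_nf
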